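/- arXiv:2604.02649 — 9 statements merged into one kernel-verified Lean document; each statement's English description precedes it below -/
import Mathlib

section
/- Let (γ_n)_{n≥0} be a nested sequence of hyperbolic elements of SL(2,ℝ), with attracting fixed points γ_n⁺, repelling fixed points γ_n⁻, and with t_n > 0 the times such that Axis(γ_n) meets the vertical ray {eᵗ i : t ≥ 0} exactly at e^{t_n} i. Then γ_n⁺ → +∞, γ_n⁻ → −∞, and t_n → +∞ as n → ∞. -/
open UpperHalfPlane Matrix Real Filter Topology
open scoped MatrixGroups

noncomputable section

namespace BellisFormal

/-- The point `eᵗ i` of the upper half-plane. -/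
def vray (t : ℝ) : ℍ := ⟨⟨0, Real.exp t⟩, Real.exp_pos t⟩

/-- Translation length of `γ`. -/
def transLength (γ : SL(2, ℝ)) : ℝ := ⨅ z : ℍ, dist z (γ • z)

/-- `γ` is hyperbolic: `|tr γ| > 2`. -/
def IsHyperbolic (γ : SL(2, ℝ)) : Prop :=
  2 < |Matrix.trace (γ : Matrix (Fin 2) (Fin 2) ℝ)|

/-- Axis of `γ`. -/
def Axis (γ : SL(2, ℝ)) : Set ℍ := {z : ℍ | dist z (γ • z) = transLength γ}

/-- `x` is a real fixed point of the Möbius map of `γ`. -/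
def IsFixedPt (γ : SL(2, ℝ)) (x : ℝ) : Prop :=
  γ 1 0 * x ^ 2 + (γ 1 1 - γ 0 0) * x - γ 0 1 = 0

def IsAttractingFixedPt (γ : SL(2, ℝ)) (x : ℝ) : Prop :=
  IsFixedPt γ x ∧ 1 < (γ 1 0 * x + γ 1 1) ^ 2

def IsRepellingFixedPt (γ : SL(2, ℝ)) (x : ℝ) : Prop :=
  IsFixedPt γ x ∧ (γ 1 0 * x + γ 1 1) ^ 2 < 1

instance : TopologicalSpace SL(2, ℝ) :=
  TopologicalSpace.induced (fun g => (g : Matrix (Fin 2) (Fin 2) ℝ)) inferInstance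

structure IsNestedSequence (γ : ℕ → SL(2, ℝ)) (γp γm : ℕ → ℝ) (t : ℕ → ℝ) : Prop where
  hyperbolic : ∀ n, IsHyperbolic (γ n)
  discrete : DiscreteTopology (Subgroup.closure (Set.range γ) : Subgroup SL(2, ℝ))
  attracting : ∀ n, IsAttractingFixedPt (γ n) (γp n)
  repelling : ∀ n, IsRepellingFixedPt (γ n) (γm n)
  plus_pos : ∀ n, 0 < γp n
  plus_mono : StrictMono γp
  minus_neg : ∀ n, γm n < 0
  minus_anti : StrictAnti γm
  t_pos : ∀ n, 0 < t n
  axis_meets : ∀ n, ∀ s : ℝ, 0 ≤ s → (vray s ∈ Axis (γ n) ↔ s = t n)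
  len_anti : StrictAnti fun n => transLength (γ n)
  len_tendsto : Filter.Tendsto (fun n => transLength (γ n)) Filter.atTop (nhds 0)

/-- geodesic flow matrix -/
def A (t : ℝ) : SL(2, ℝ) :=
  ⟨!![Real.exp (t / 2), 0; 0, Real.exp (-(t / 2))], by
    simp [Matrix.det_fin_two_of, ← Real.exp_add]⟩

/-- horocyclic flow matrix -/
def N (s : ℝ) : SL(2, ℝ) :=
  ⟨!![1, s; 0, 1], by simp [Matrix.det_fin_two_of]⟩

/-- the distance `d₁` between unit tangent vectors encoded as elements of `SL(2,ℝ)` -/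
def d1 (g h : SL(2, ℝ)) : ℝ :=
  dist (g • vray 0) (h • vray 0) + dist (g • vray 1) (h • vray 1)

/-- product `α 0 * α 1 * ⋯ * α n` -/
def seqProd (α : ℕ → SL(2, ℝ)) (n : ℕ) : SL(2, ℝ) :=
  ((List.range (n + 1)).map α).prod


/-- the point `a + y i` of the upper half-plane -/
def mkPt (a y : ℝ) (hy : 0 < y) : ℍ := ⟨⟨a, y⟩, hy⟩

/-- the Busemann cocycle values `r_n = B_∞(β_n⁻¹ • i, i)` -/
def busR (α : ℕ → SL(2, ℝ)) (n : ℕ) : ℝ :=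
  - Real.log (((seqProd α n)⁻¹ • UpperHalfPlane.I).im)

/-!
For `g = !![a, b; c, d] ∈ SL(2,ℝ)` with real fixed points `m < p`, the quadratic
`c z² + (d - a) z - b` factors as `c (z - p)(z - m)`, and its modulus computes the displacement:
`(2 Im z · sinh (d(z, g z) / 2))² = c² (((p - m) Im z)² + ((Re z - p)(Re z - m) + (Im z)²)²)`.
Hence `sinh (ℓ(g) / 2) = |c| (p - m) / 2`, the axis is the semicircle over `[m, p]`, and it meets
the imaginary axis at height `√(-p m)`, i.e. `e^{2 tₙ} = γₙ⁺ · (-γₙ⁻)`.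

It therefore suffices that `min (γₙ⁺, -γₙ⁻) → ∞`. If not, this monotone quantity stays bounded,
and since `sinh (ℓ(γₙ) / 2) → 0` the entries `b = -c p m`, `c` and `a - d = c (p + m)` of `γₙ` all
tend to `0`. Then `tr² = (a - d)² + 4 + 4 b c → 4`, so `γₙ² → 1` (`γₙ` itself need not converge,
its trace may approach `2` or `-2`). Discreteness forces `γₙ² = 1` for some `n`, which is
impossible for a hyperbolic element.
-/

lemma im_sl_smul_eq_div_normSq (g : SL(2, ℝ)) (z : ℍ) :
    (g • z).im = z.im / Complex.normSq ((g 1 0 : ℂ) * z + g 1 1) := by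
  rw [show g • z = SpecialLinearGroup.mapGL ℝ g • z from rfl, im_smul_eq_div_normSq]
  simp [denom]

lemma two_im_mul_sinh_half_dist_smul (g : SL(2, ℝ)) (z : ℍ) :
    2 * z.im * sinh (dist z (g • z) / 2) =
      ‖(g 1 0 : ℂ) * z ^ 2 + (g 1 1 - g 0 0) * z - g 0 1‖ := by
  set den : ℂ := (g 1 0 : ℂ) * z + g 1 1
  have hden : 0 < ‖den‖ := by
    simpa [denom] using denom_ne_zero (SpecialLinearGroup.mapGL ℝ g) z
  have hsqrt : √(z.im * (g • z).im) = z.im / ‖den‖ := by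
    rw [im_sl_smul_eq_div_normSq, ← Complex.sq_norm, ← mul_div_assoc, ← sq, ← div_pow,
      Real.sqrt_sq (div_pos z.im_pos hden).le]
  have hcoe : ((g • z : ℍ) : ℂ) = ((g 0 0 : ℂ) * z + g 0 1) / den := by
    simpa using coe_specialLinearGroup_apply g z
  rw [sinh_half_dist, hsqrt, Complex.dist_eq, hcoe]
  have hz := z.im_pos
  field_simp
  rw [← norm_mul]
  congr 1
  field_simp [norm_pos_iff.mp hden]
  ring

lemma normSq_sub_mul_sub (z : ℂ) (p m : ℝ) :
    Complex.normSq ((z - p) * (z - m)) =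
      ((p - m) * z.im) ^ 2 + ((z.re - p) * (z.re - m) + z.im ^ 2) ^ 2 := by
  rw [Complex.normSq_mul]
  simp only [Complex.normSq_apply, Complex.sub_re, Complex.sub_im, Complex.ofReal_re,
    Complex.ofReal_im]
  ring

lemma transLength_nonneg (g : SL(2, ℝ)) : 0 ≤ transLength g :=
  Real.iInf_nonneg fun _ => dist_nonneg

lemma transLength_eq_of_forall_dist_le {g : SL(2, ℝ)} {z₀ : ℍ}
    (h : ∀ z : ℍ, dist z₀ (g • z₀) ≤ dist z (g • z)) : transLength g = dist z₀ (g • z₀) :=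
  le_antisymm (ciInf_le ⟨0, by rintro _ ⟨z, rfl⟩; exact dist_nonneg⟩ z₀) (le_ciInf h)

def semicircle (m p : ℝ) : Set ℍ := {z | (z.re - p) * (z.re - m) + z.im ^ 2 = 0}

lemma vray_mem_semicircle_iff {m p s : ℝ} : vray s ∈ semicircle m p ↔ exp s ^ 2 = -(p * m) := by
  change (0 - p) * (0 - m) + exp s ^ 2 = 0 ↔ _
  constructor <;> intro h <;> linarith

namespace IsFixedPt

variable {g : SL(2, ℝ)} {p m : ℝ}

lemma sub_diag (hp : IsFixedPt g p) (hm : IsFixedPt g m) (hne : p ≠ m) :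
    g 0 0 - g 1 1 = g 1 0 * (p + m) := by
  have h : (p - m) * (g 1 0 * (p + m) + (g 1 1 - g 0 0)) = 0 := by
    unfold IsFixedPt at hp hm
    linear_combination hp - hm
  linear_combination -(mul_eq_zero.mp h).resolve_left (sub_ne_zero.mpr hne)

lemma apply_zero_one (hp : IsFixedPt g p) (hm : IsFixedPt g m) (hne : p ≠ m) :
    g 0 1 = -(g 1 0 * (p * m)) := by
  have h := sub_diag hp hm hne
  unfold IsFixedPt at hp
  linear_combination -hp - p * h

lemma quadratic_eq_mul_sub_mul_sub (hp : IsFixedPt g p) (hm : IsFixedPt g m) (hne : p ≠ m)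
    (z : ℂ) :
    (g 1 0 : ℂ) * z ^ 2 + (g 1 1 - g 0 0) * z - g 0 1 = g 1 0 * ((z - p) * (z - m)) := by
  have h₁ := congrArg Complex.ofReal (sub_diag hp hm hne)
  have h₂ := congrArg Complex.ofReal (apply_zero_one hp hm hne)
  push_cast at h₁ h₂
  linear_combination (-z) * h₁ - h₂

end IsFixedPt

lemma IsAttractingFixedPt.apply_one_zero_ne_zero {g : SL(2, ℝ)} {p m : ℝ}
    (hp : IsAttractingFixedPt g p) (hm : IsRepellingFixedPt g m) : g 1 0 ≠ 0 := by
  intro hc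
  have h₁ := hp.2
  have h₂ := hm.2
  simp only [hc, zero_mul, zero_add] at h₁ h₂
  linarith

section FixedPoints

variable {g : SL(2, ℝ)} {p m : ℝ}

lemma sq_two_im_mul_sinh_half_dist_smul (hp : IsFixedPt g p) (hm : IsFixedPt g m)
    (hne : p ≠ m) (z : ℍ) :
    (2 * z.im * sinh (dist z (g • z) / 2)) ^ 2 =
      g 1 0 ^ 2 * (((p - m) * z.im) ^ 2 + ((z.re - p) * (z.re - m) + z.im ^ 2) ^ 2) := by
  rw [two_im_mul_sinh_half_dist_smul, hp.quadratic_eq_mul_sub_mul_sub hm hne, Complex.sq_norm,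
    Complex.normSq_mul, Complex.normSq_ofReal, normSq_sub_mul_sub, coe_re, coe_im]
  ring

lemma abs_mul_sub_div_two_le_sinh_half_dist_smul (hp : IsFixedPt g p) (hm : IsFixedPt g m)
    (hlt : m < p) (z : ℍ) :
    |g 1 0| * (p - m) / 2 ≤ sinh (dist z (g • z) / 2) := by
  have key := sq_two_im_mul_sinh_half_dist_smul hp hm hlt.ne' z
  have hy := z.im_pos
  have hs : 0 ≤ sinh (dist z (g • z) / 2) := sinh_nonneg_iff.mpr (by positivity)
  have hc : 0 ≤ |g 1 0| * (p - m) := mul_nonneg (abs_nonneg _) (sub_pos.mpr hlt).le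
  have hsq : (|g 1 0| * (p - m) * z.im) ^ 2 ≤ (2 * z.im * sinh (dist z (g • z) / 2)) ^ 2 := by
    rw [key, mul_pow, mul_pow, sq_abs]
    nlinarith [mul_nonneg (sq_nonneg (g 1 0)) (sq_nonneg ((z.re - p) * (z.re - m) + z.im ^ 2))]
  rw [pow_le_pow_iff_left₀ (by positivity) (by positivity) two_ne_zero] at hsq
  rw [div_le_iff₀ two_pos]
  nlinarith

lemma sinh_half_dist_smul_of_mem_semicircle (hp : IsFixedPt g p) (hm : IsFixedPt g m)
    (hlt : m < p) {z : ℍ} (hz : z ∈ semicircle m p) :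
    sinh (dist z (g • z) / 2) = |g 1 0| * (p - m) / 2 := by
  have key := sq_two_im_mul_sinh_half_dist_smul hp hm hlt.ne' z
  rw [show (z.re - p) * (z.re - m) + z.im ^ 2 = 0 from hz, ← sq_abs (g 1 0)] at key
  have hy := z.im_pos
  have hs : 0 ≤ sinh (dist z (g • z) / 2) := sinh_nonneg_iff.mpr (by positivity)
  have hc : 0 ≤ |g 1 0| * (p - m) := mul_nonneg (abs_nonneg _) (sub_pos.mpr hlt).le
  have h : 2 * z.im * sinh (dist z (g • z) / 2) = |g 1 0| * (p - m) * z.im := by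
    rw [← sq_eq_sq₀ (by positivity) (by positivity), key]
    ring
  field_simp
  nlinarith

lemma sinh_half_transLength (hp : IsFixedPt g p) (hm : IsFixedPt g m) (hlt : m < p) :
    sinh (transLength g / 2) = |g 1 0| * (p - m) / 2 := by
  set z₀ := mkPt ((p + m) / 2) ((p - m) / 2) (by linarith)
  have hz₀ : z₀ ∈ semicircle m p := by
    change ((p + m) / 2 - p) * ((p + m) / 2 - m) + ((p - m) / 2) ^ 2 = 0
    ring
  have h₀ := sinh_half_dist_smul_of_mem_semicircle hp hm hlt hz₀
  rwa [transLength_eq_of_forall_dist_le fun z => ?_]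
  have := abs_mul_sub_div_two_le_sinh_half_dist_smul hp hm hlt z
  rw [← h₀, sinh_le_sinh] at this
  linarith

lemma axis_eq_semicircle (hp : IsFixedPt g p) (hm : IsFixedPt g m) (hlt : m < p)
    (hc : g 1 0 ≠ 0) : Axis g = semicircle m p := by
  ext z
  refine ⟨fun hz => ?_, fun hz => ?_⟩
  · have key := sq_two_im_mul_sinh_half_dist_smul hp hm hlt.ne' z
    have h : sinh (dist z (g • z) / 2) = |g 1 0| * (p - m) / 2 := by
      rw [← sinh_half_transLength hp hm hlt, show dist z (g • z) = transLength g from hz]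
    rw [h, ← sq_abs (g 1 0)] at key
    have : |g 1 0| ^ 2 * ((z.re - p) * (z.re - m) + z.im ^ 2) ^ 2 = 0 := by
      linear_combination -key
    show (z.re - p) * (z.re - m) + z.im ^ 2 = 0
    simpa [hc] using this
  · have h := sinh_half_dist_smul_of_mem_semicircle hp hm hlt hz
    rw [← sinh_half_transLength hp hm hlt, sinh_inj] at h
    change dist z (g • z) = transLength g
    linarith

lemma abs_apply_one_zero_eq (hp : IsFixedPt g p) (hm : IsFixedPt g m) (hlt : m < p) :
    |g 1 0| = 2 * sinh (transLength g / 2) / (p - m) := by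
  rw [sinh_half_transLength hp hm hlt]
  field_simp [(sub_pos.mpr hlt).ne']

lemma abs_sub_diag_le (hp : IsFixedPt g p) (hm : IsFixedPt g m) (hm0 : m ≤ 0) (hp0 : 0 ≤ p)
    (hlt : m < p) : |g 0 0 - g 1 1| ≤ 2 * sinh (transLength g / 2) := by
  rw [hp.sub_diag hm hlt.ne', abs_mul, sinh_half_transLength hp hm hlt]
  have : |p + m| ≤ p - m := abs_le.mpr ⟨by linarith, by linarith⟩
  nlinarith [abs_nonneg (g 1 0)]

lemma abs_apply_zero_one_le (hp : IsFixedPt g p) (hm : IsFixedPt g m) (hm0 : m ≤ 0)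
    (hp0 : 0 ≤ p) (hlt : m < p) :
    |g 0 1| ≤ 2 * min p (-m) * sinh (transLength g / 2) := by
  rw [hp.apply_zero_one hm hlt.ne', abs_neg, abs_mul, sinh_half_transLength hp hm hlt,
    abs_mul, abs_of_nonneg hp0, abs_of_nonpos hm0]
  have : p * -m ≤ (p - m) * min p (-m) := by
    rcases min_cases p (-m) with ⟨h, _⟩ | ⟨h, _⟩ <;> rw [h] <;> nlinarith
  nlinarith [abs_nonneg (g 1 0)]

end FixedPoints

lemma isInducing_coe_matrix : IsInducing (fun g : SL(2, ℝ) => (g : Matrix (Fin 2) (Fin 2) ℝ)) :=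
  ⟨rfl⟩

lemma tendsto_sq_nhds_one_of_tendsto_zero {ι : Type*} {l : Filter ι} {u : ι → SL(2, ℝ)}
    (hb : Tendsto (fun n => u n 0 1) l (𝓝 0)) (hc : Tendsto (fun n => u n 1 0) l (𝓝 0))
    (hδ : Tendsto (fun n => u n 0 0 - u n 1 1) l (𝓝 0)) :
    Tendsto (fun n => u n ^ 2) l (𝓝 1) := by
  have hdet : ∀ n, u n 0 0 * u n 1 1 - u n 0 1 * u n 1 0 = 1 := fun n => by
    have := (u n).prop
    rwa [Matrix.det_fin_two] at this
  have htr_sq : Tendsto (fun n => (u n 0 0 + u n 1 1) ^ 2) l (𝓝 4) := by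
    have h := ((hδ.pow 2).add ((hb.mul hc).const_mul 4)).add_const 4
    norm_num at h
    exact h.congr fun n => by linear_combination -4 * hdet n
  have htr : IsBoundedUnder (· ≤ ·) l (norm ∘ fun n => u n 0 0 + u n 1 1) := by
    have h := htr_sq.sqrt
    rw [show (4 : ℝ) = 2 ^ 2 by norm_num, Real.sqrt_sq zero_le_two] at h
    simp only [Real.sqrt_sq_eq_abs] at h
    exact h.isBoundedUnder_le
  have hδtr := hδ.zero_mul_isBoundedUnder_le htr
  rw [isInducing_coe_matrix.tendsto_nhds_iff]
  refine tendsto_pi_nhds.mpr fun i => tendsto_pi_nhds.mpr fun j => ?_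
  fin_cases i <;> fin_cases j <;>
    simp only [Function.comp_apply, sq, Matrix.SpecialLinearGroup.coe_mul,
      Matrix.SpecialLinearGroup.coe_one, Matrix.mul_apply, Fin.sum_univ_two, Fin.zero_eta,
      Fin.mk_one, Fin.isValue, one_apply_eq, one_apply_ne zero_ne_one, one_apply_ne one_ne_zero]
  · have h := ((htr_sq.add (hδtr.const_mul 2)).add (hδ.pow 2)).div_const 4 |>.add (hb.mul hc)
    norm_num at h
    exact h.congr fun n => by ring
  · exact (hb.zero_mul_isBoundedUnder_le htr).congr fun n => by ring
  · exact (hc.zero_mul_isBoundedUnder_le htr).congr fun n => by ring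
  · have h := ((htr_sq.sub (hδtr.const_mul 2)).add (hδ.pow 2)).div_const 4 |>.add (hb.mul hc)
    norm_num at h
    exact h.congr fun n => by ring

lemma eventually_eq_one_of_tendsto_nhds_one {G ι : Type*} [Group G] [TopologicalSpace G]
    {H : Subgroup G} [DiscreteTopology H] {l : Filter ι} {u : ι → G} (hu : ∀ n, u n ∈ H)
    (h : Tendsto u l (𝓝 1)) : ∀ᶠ n in l, u n = 1 := by
  have h' : Tendsto (fun n => (⟨u n, hu n⟩ : H)) l (𝓝 1) := tendsto_subtype_rng.mpr h
  rw [nhds_discrete, tendsto_pure] at h'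
  exact h'.mono fun n hn => congrArg Subtype.val hn

lemma IsHyperbolic.sq_ne_one {g : SL(2, ℝ)} (hg : IsHyperbolic g) : g ^ 2 ≠ 1 := by
  intro h
  have h₀₀ := congrArg (fun g : SL(2, ℝ) => g 0 0) h
  have h₁₁ := congrArg (fun g : SL(2, ℝ) => g 1 1) h
  simp only [sq, Matrix.SpecialLinearGroup.coe_mul, Matrix.SpecialLinearGroup.coe_one,
    Matrix.mul_apply, Fin.sum_univ_two, one_apply_eq] at h₀₀ h₁₁
  have hdet := g.prop
  rw [Matrix.det_fin_two] at hdet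
  unfold IsHyperbolic at hg
  rw [Matrix.trace_fin_two] at hg
  nlinarith [sq_abs (g 0 0 + g 1 1)]

namespace IsNestedSequence

variable {γ : ℕ → SL(2, ℝ)} {γp γm t : ℕ → ℝ}

lemma fixedPt_lt (h : IsNestedSequence γ γp γm t) (n : ℕ) : γm n < γp n :=
  (h.minus_neg n).trans (h.plus_pos n)

lemma exp_t_sq_eq (h : IsNestedSequence γ γp γm t) (n : ℕ) : exp (t n) ^ 2 = γp n * -γm n := by
  have hmem : vray (t n) ∈ Axis (γ n) := (h.axis_meets n (t n) (h.t_pos n).le).mpr rfl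
  rw [axis_eq_semicircle (h.attracting n).1 (h.repelling n).1 (h.fixedPt_lt n)
    ((h.attracting n).apply_one_zero_ne_zero (h.repelling n)), vray_mem_semicircle_iff] at hmem
  rw [hmem]
  ring

lemma tendsto_sq_nhds_one_of_bddAbove (h : IsNestedSequence γ γp γm t) {C : ℝ}
    (hC : ∀ n, min (γp n) (-γm n) ≤ C) :
    Tendsto (fun n => γ n ^ 2) atTop (𝓝 1) := by
  have hℓ : Tendsto (fun n => transLength (γ n) / 2) atTop (𝓝 0) := by
    simpa using h.len_tendsto.div_const 2
  have hS : Tendsto (fun n => sinh (transLength (γ n) / 2)) atTop (𝓝 0) := by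
    simpa [Function.comp_def] using (continuous_sinh.tendsto 0).comp hℓ
  have hS0 n : 0 ≤ sinh (transLength (γ n) / 2) :=
    sinh_nonneg_iff.mpr (by linarith [transLength_nonneg (γ n)])
  have hfp n := (h.attracting n).1
  have hfm n := (h.repelling n).1
  have hm0 n := (h.minus_neg n).le
  have hp0 n := (h.plus_pos n).le
  refine tendsto_sq_nhds_one_of_tendsto_zero ?_ ?_ ?_
  · refine squeeze_zero_norm (fun n => ?_) (by simpa using hS.const_mul (2 * C))
    refine (abs_apply_zero_one_le (hfp n) (hfm n) (hm0 n) (hp0 n) (h.fixedPt_lt n)).trans ?_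
    gcongr
    · exact hS0 n
    · exact hC n
  · refine squeeze_zero_norm (fun n => ?_)
      (by simpa using (hS.const_mul 2).div_const (γp 0 - γm 0))
    rw [Real.norm_eq_abs, abs_apply_one_zero_eq (hfp n) (hfm n) (h.fixedPt_lt n)]
    refine div_le_div_of_nonneg_left (by linarith [hS0 n]) (sub_pos.mpr (h.fixedPt_lt 0)) ?_
    linarith [h.plus_mono.monotone n.zero_le, h.minus_anti.antitone n.zero_le]
  · exact squeeze_zero_norm
      (fun n => abs_sub_diag_le (hfp n) (hfm n) (hm0 n) (hp0 n) (h.fixedPt_lt n))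
      (by simpa using hS.const_mul 2)

lemma tendsto_min_atTop (h : IsNestedSequence γ γp γm t) :
    Tendsto (fun n => min (γp n) (-γm n)) atTop atTop := by
  refine tendsto_atTop_atTop_of_monotone'
    (h.plus_mono.monotone.min fun _ _ hij => neg_le_neg (h.minus_anti.antitone hij)) ?_
  rintro ⟨C, hC⟩
  have := h.discrete
  have hsq := h.tendsto_sq_nhds_one_of_bddAbove fun n => hC (Set.mem_range_self n)
  obtain ⟨n, hn⟩ := (eventually_eq_one_of_tendsto_nhds_one
    (fun n => pow_mem (Subgroup.subset_closure (Set.mem_range_self n)) 2) hsq).exists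
  exact (h.hyperbolic n).sq_ne_one hn

end IsNestedSequence

theorem nested_sequence_endpoints_tendsto
    (γ : ℕ → SL(2, ℝ)) (γp γm : ℕ → ℝ) (t : ℕ → ℝ)
    (h : IsNestedSequence γ γp γm t) :
    Tendsto γp atTop atTop ∧ Tendsto γm atTop atBot ∧ Tendsto t atTop atTop := by
  have hp : Tendsto γp atTop atTop :=
    tendsto_atTop_mono (fun n => min_le_left _ _) h.tendsto_min_atTop
  have hm : Tendsto (fun n => -γm n) atTop atTop :=
    tendsto_atTop_mono (fun n => min_le_right _ _) h.tendsto_min_atTop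
  have ht n : (log (γp n) + log (-γm n)) / 2 = t n := by
    rw [← log_mul (h.plus_pos n).ne' (neg_pos.mpr (h.minus_neg n)).ne', ← h.exp_t_sq_eq n,
      log_pow, log_exp]
    ring
  refine ⟨hp, tendsto_neg_atTop_iff.mp hm, Tendsto.congr ht ?_⟩
  exact ((tendsto_log_atTop.comp hp).atTop_add_atTop (tendsto_log_atTop.comp hm)).atTop_div_const
    two_pos

end BellisFormal
end
end

section
/- Let γ ∈ SL(2,ℝ) be hyperbolic and let x ∈ ℍ. Assume there exists t₀ ≥ 0 such that the point Re(x) + (Im(x)·e^{t₀}) i of ℍ (the point at time t₀ on the vertical geodesic ray from x toward ∞) belongs to Axis(γ). Then |Real.log (Im(γ⁻¹ • x)) − Real.log (Im x)| ≤ ℓ(γ). (This is the bound |B_∞(γ⁻¹x, x)| ≤ ℓ(γ) on the winding time, where B_∞(x,y) = log Im(y) − log Im(x) is the Busemann cocycle based at ∞.) -/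
open UpperHalfPlane Matrix Real Filter Topology
open scoped MatrixGroups

noncomputable section

namespace BellisFormal

/-!
Write `γ = !![a, b; c, d]`, `T = a + d` and `Q = SL2.axisDefect γ`. For every `g ∈ SL(2, ℝ)`,
`cosh² (d(w, g w) / 2) = (T / 2)² + (Q(w) / (2 Im w))²`, so for hyperbolic `γ` (where `Q` has a
zero) the axis is the geodesic `Q = 0` and `2 cosh (ℓ / 2) = |T|`.
Since `Im (γ⁻¹ x) = Im x / |a - c x|²`, the claim is `e^{-ℓ} ≤ |a - c x|² ≤ e^ℓ`.
Put `u = a - c Re x` and let `Re x + i Y`, `Y ≥ Im x`, be the point of the axis above `x`;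
then `Q = 0` there reads `u² + c² Y² = u T - 1`, so `u² ≤ |a - c x|² ≤ u T - 1`.
In particular `u² - |u| |T| + 1 ≤ 0`, which traps `|u|` between `e^{-ℓ/2}` and `e^{ℓ/2}`.
-/

lemma isHyperbolic_iff (g : SL(2, ℝ)) : IsHyperbolic g ↔ 4 < (g 0 0 + g 1 1) ^ 2 := by
  rw [IsHyperbolic, Matrix.trace_fin_two, show (4 : ℝ) = 2 ^ 2 by norm_num, sq_lt_sq, abs_two]

lemma re_mkPt (a y : ℝ) (hy : 0 < y) : (mkPt a y hy).re = a := rfl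

lemma im_mkPt (a y : ℝ) (hy : 0 < y) : (mkPt a y hy).im = y := rfl

namespace SL2

variable (g : SL(2, ℝ)) (w : ℍ)

lemma det_eq_one : g 0 0 * g 1 1 - g 0 1 * g 1 0 = 1 := by
  rw [← Matrix.det_fin_two]; exact g.det_coe

lemma coe_smul : ((g • w : ℍ) : ℂ) = (g 0 0 * w + g 0 1) / (g 1 0 * w + g 1 1) := by
  simpa using coe_specialLinearGroup_apply g w

lemma denom_ne_zero : (g 1 0 * w + g 1 1 : ℂ) ≠ 0 := by
  simpa [denom] using UpperHalfPlane.denom_ne_zero (Matrix.SpecialLinearGroup.mapGL ℝ g) w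

lemma im_smul : (g • w).im = w.im / Complex.normSq (g 1 0 * w + g 1 1) := by
  change (Matrix.SpecialLinearGroup.mapGL ℝ g • w).im = _
  simp [UpperHalfPlane.im_smul_eq_div_normSq, denom]

lemma im_inv_smul :
    (g⁻¹ • w).im = w.im / ((g 0 0 - g 1 0 * w.re) ^ 2 + (g 1 0 * w.im) ^ 2) := by
  rw [im_smul, Matrix.SpecialLinearGroup.SL2_inv_expl]
  simp only [cons_val', cons_val_zero, cons_val_fin_one, cons_val_one, Complex.ofReal_neg,
    neg_mul, Complex.normSq_apply, Complex.add_re, Complex.neg_re, Complex.mul_re,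
    Complex.ofReal_re, coe_re, Complex.ofReal_im, coe_im, zero_mul, sub_zero, Complex.add_im,
    Complex.neg_im, Complex.mul_im, add_zero, mul_neg, neg_neg]
  ring_nf

lemma coe_sub_smul : (w : ℂ) - (g • w : ℍ) =
    (g 1 0 * w ^ 2 + (g 1 1 - g 0 0) * w - g 0 1) / (g 1 0 * w + g 1 1) := by
  rw [coe_smul, eq_div_iff (denom_ne_zero g w), sub_mul, div_mul_cancel₀ _ (denom_ne_zero g w)]
  ring

def axisDefect : ℝ := g 1 0 * (w.re ^ 2 + w.im ^ 2) + (g 1 1 - g 0 0) * w.re - g 0 1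

lemma normSq_fixedPointPoly :
    Complex.normSq (g 1 0 * w ^ 2 + (g 1 1 - g 0 0) * w - g 0 1) =
      axisDefect g w ^ 2 + ((g 0 0 + g 1 1) ^ 2 - 4) * w.im ^ 2 := by
  simp only [sq, Complex.normSq_apply, Complex.sub_re, Complex.add_re, Complex.mul_re,
    Complex.ofReal_re, coe_re, coe_im, Complex.ofReal_im, Complex.mul_im, zero_mul, sub_zero,
    Complex.sub_im, sub_self, Complex.add_im, add_zero, axisDefect]
  linear_combination (-4 * w.im ^ 2) * det_eq_one g

lemma cosh_half_dist_smul_sq : cosh (dist w (g • w) / 2) ^ 2 =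
    ((g 0 0 + g 1 1) / 2) ^ 2 + (axisDefect g w / (2 * w.im)) ^ 2 := by
  have hj := Complex.normSq_pos.2 (denom_ne_zero g w)
  have hy := w.im_pos
  rw [cosh_sq, sinh_half_dist, div_pow, mul_pow, sq_sqrt (by positivity), Complex.dist_eq,
    Complex.sq_norm, coe_sub_smul, Complex.normSq_div, normSq_fixedPointPoly, im_smul]
  field_simp
  ring

lemma dist_smul_le_dist_smul_iff (w' : ℍ) : dist w (g • w) ≤ dist w' (g • w') ↔
    (axisDefect g w / (2 * w.im)) ^ 2 ≤ (axisDefect g w' / (2 * w'.im)) ^ 2 := by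
  rw [← div_le_div_iff_of_pos_right two_pos,
    ← abs_of_nonneg (by positivity : 0 ≤ dist w (g • w) / 2),
    ← abs_of_nonneg (by positivity : 0 ≤ dist w' (g • w') / 2), ← cosh_le_cosh,
    ← sq_le_sq₀ (cosh_pos _).le (cosh_pos _).le, cosh_half_dist_smul_sq, cosh_half_dist_smul_sq,
    add_le_add_iff_left]

variable {g}

lemma exists_axisDefect_eq_zero (hg : 4 < (g 0 0 + g 1 1) ^ 2) : ∃ w : ℍ, axisDefect g w = 0 := by
  have hdet := det_eq_one g
  by_cases hc : g 1 0 = 0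
  · have hda : g 1 1 - g 0 0 ≠ 0 := by
      intro h
      rw [hc] at hdet
      nlinarith
    refine ⟨mkPt (g 0 1 / (g 1 1 - g 0 0)) 1 one_pos, ?_⟩
    rw [axisDefect, re_mkPt, hc]
    field_simp
    ring
  · set s := √((g 0 0 + g 1 1) ^ 2 - 4)
    have hs : s ^ 2 = (g 0 0 + g 1 1) ^ 2 - 4 := sq_sqrt (by linarith)
    have hs_pos : 0 < s := sqrt_pos.2 (by linarith)
    refine ⟨mkPt ((g 0 0 - g 1 1) / (2 * g 1 0)) (s / (2 * |g 1 0|)) (by positivity), ?_⟩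
    rw [axisDefect, re_mkPt, im_mkPt, div_pow s, mul_pow, sq_abs, hs]
    field_simp
    linear_combination 4 * hdet

lemma dist_smul_le_of_axisDefect_eq_zero {w₀ : ℍ} (hw₀ : axisDefect g w₀ = 0) :
    dist w₀ (g • w₀) ≤ dist w (g • w) :=
  (dist_smul_le_dist_smul_iff g w₀ w).2 (by rw [hw₀, zero_div, zero_pow two_ne_zero]; positivity)

variable {w₀ : ℍ} (hw₀ : axisDefect g w₀ = 0)
include hw₀

lemma transLength_eq_dist : transLength g = dist w₀ (g • w₀) :=
  le_antisymm (ciInf_le ⟨0, by rintro _ ⟨z, rfl⟩; exact dist_nonneg⟩ w₀)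
    (le_ciInf fun w => dist_smul_le_of_axisDefect_eq_zero w hw₀)

lemma mem_axis_iff : w ∈ Axis g ↔ axisDefect g w = 0 := by
  change dist w (g • w) = transLength g ↔ _
  rw [transLength_eq_dist hw₀, le_antisymm_iff,
    and_iff_left (dist_smul_le_of_axisDefect_eq_zero w hw₀), dist_smul_le_dist_smul_iff, hw₀]
  simp [w.im_pos.ne']

lemma two_mul_cosh_half_transLength : 2 * cosh (transLength g / 2) = |g 0 0 + g 1 1| := by
  have h := cosh_half_dist_smul_sq g w₀
  rw [hw₀, zero_div, zero_pow two_ne_zero, add_zero, ← transLength_eq_dist hw₀] at h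
  rw [← sqrt_sq_eq_abs, ← sqrt_sq (by positivity : 0 ≤ 2 * cosh (transLength g / 2)), mul_pow, h]
  ring_nf

end SL2

lemma abs_log_le_of_sq_le_of_le_mul_sub_one {u T L ℓ : ℝ} (hℓ : 0 ≤ ℓ)
    (hT : 2 * cosh (ℓ / 2) = |T|) (hu : u ^ 2 ≤ L) (hL : L ≤ u * T - 1) : |log L| ≤ ℓ := by
  set q := exp (ℓ / 2)
  set p := exp (-(ℓ / 2))
  have hp : 0 < p := exp_pos _
  have hq : 1 ≤ q := one_le_exp (by positivity)
  have hpq : p * q = 1 := by rw [← exp_add, neg_add_cancel, exp_zero]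
  have hp_le_q : p ≤ q := by nlinarith
  have huT : u * T ≤ |u| * (q + p) := by
    rw [show q + p = |T| by rw [← hT, cosh_eq]; ring, ← abs_mul]
    exact le_abs_self _
  have hu_between : (|u| - q) * (|u| - p) ≤ 0 := by nlinarith [sq_abs u]
  have hp_le_u : p ≤ |u| := by
    by_contra! h
    nlinarith [mul_pos (sub_pos.2 h) (sub_pos.2 (h.trans_le hp_le_q))]
  have hu_le_q : |u| ≤ q := by
    by_contra! h
    nlinarith [mul_pos (sub_pos.2 h) (sub_pos.2 (hp_le_q.trans_lt h))]
  have hL_lower : exp (-ℓ) ≤ L :=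
    calc exp (-ℓ) = p ^ 2 := by rw [sq, ← exp_add]; ring_nf
      _ ≤ |u| ^ 2 := by gcongr
      _ = u ^ 2 := sq_abs u
      _ ≤ L := hu
  have hL_upper : L ≤ exp ℓ :=
    calc L ≤ |u| * (q + p) - 1 := by linarith
      _ ≤ q * (q + p) - 1 := by gcongr
      _ = exp ℓ := by rw [mul_add, ← sq, mul_comm, hpq, sq, ← exp_add]; ring_nf
  have hL_pos : 0 < L := (exp_pos _).trans_le hL_lower
  rw [abs_le, le_log_iff_exp_le hL_pos, log_le_iff_le_exp hL_pos]
  exact ⟨hL_lower, hL_upper⟩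

theorem winding_time_bound
    (γ : SL(2, ℝ)) (hγ : IsHyperbolic γ) (x : ℍ)
    (h : ∃ t₀ : ℝ, 0 ≤ t₀ ∧
      mkPt x.re (x.im * Real.exp t₀) (mul_pos x.im_pos (Real.exp_pos t₀)) ∈ Axis γ) :
    |Real.log ((γ⁻¹ • x).im) - Real.log x.im| ≤ transLength γ := by
  obtain ⟨t₀, ht₀, hz⟩ := h
  obtain ⟨w₀, hw₀⟩ := SL2.exists_axisDefect_eq_zero ((isHyperbolic_iff γ).1 hγ)
  have hQ := (SL2.mem_axis_iff _ hw₀).1 hz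
  rw [SL2.axisDefect, re_mkPt, im_mkPt] at hQ
  have hℓ : 0 ≤ transLength γ := hz ▸ dist_nonneg
  have hL : 0 < (γ 0 0 - γ 1 0 * x.re) ^ 2 + (γ 1 0 * x.im) ^ 2 := by
    have := (γ⁻¹ • x).im_pos
    rwa [SL2.im_inv_smul, div_pos_iff_of_pos_left x.im_pos] at this
  rw [SL2.im_inv_smul, log_div x.im_pos.ne' hL.ne', sub_sub_cancel_left, abs_neg]
  refine abs_log_le_of_sq_le_of_le_mul_sub_one hℓ (SL2.two_mul_cosh_half_transLength hw₀)
    (le_add_of_nonneg_right (sq_nonneg _)) ?_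
  have hY : x.im ≤ x.im * exp t₀ := le_mul_of_one_le_right x.im_pos.le (one_le_exp ht₀)
  have hcY : (γ 1 0 * x.im) ^ 2 ≤ (γ 1 0 * (x.im * exp t₀)) ^ 2 := by
    rw [mul_pow, mul_pow]; gcongr
  have hz_eq : (γ 0 0 - γ 1 0 * x.re) ^ 2 + (γ 1 0 * (x.im * exp t₀)) ^ 2 =
      (γ 0 0 - γ 1 0 * x.re) * (γ 0 0 + γ 1 1) - 1 := by
    linear_combination γ 1 0 * hQ - SL2.det_eq_one γ
  linarith

end BellisFormal
end
end

section
/- Let γ ∈ SL(2,ℝ) be hyperbolic and let z ∈ ℍ. If there exists w ∈ Axis(γ) with dist(z, w) ≤ 1, then dist(z, γ • z) ≤ 2 ℓ(γ). -/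
open UpperHalfPlane Matrix Real Filter Topology
open scoped MatrixGroups

noncomputable section

namespace BellisFormal

/-! A hyperbolic `γ` is conjugate, up to sign, to the dilation `A l : z ↦ eˡ z` with `l > 0`.
Conjugation preserves displacements, so `ℓ(γ) = ℓ(A l) = l` and the axis of `γ` is carried to that
of `A l`, the imaginary axis. For the dilation, `d(z, eˡ z) = 2 arsinh (‖z‖ / Im z · sinh (l / 2))`,
and `‖z‖ / Im z` is the hyperbolic cosine of the distance from `z` to the imaginary axis, so it is at
most `cosh 1 ≤ 2` within distance `1` of the axis. Since `2 sinh (l / 2) ≤ sinh l`, the displacement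
is then at most `2 l`. -/

theorem exists_det_eq_one_mul_eq_mul_diag {K : Type*} [Field K]
    (M : Matrix (Fin 2) (Fin 2) K) (hdet : M.det = 1) {x y : K} (hprod : x * y = 1)
    (hsum : x + y = M.trace) (hne : x ≠ y) :
    ∃ P : Matrix (Fin 2) (Fin 2) K, P.det = 1 ∧ M * P = P * !![x, 0; 0, y] := by
  obtain ⟨a, b, c, d, rfl⟩ : ∃ a b c d : K, M = !![a, b; c, d] :=
    ⟨_, _, _, _, M.eta_fin_two⟩
  rw [Matrix.det_fin_two_of] at hdet
  rw [Matrix.trace_fin_two_of] at hsum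
  obtain ⟨p, q, hQ⟩ : ∃ p q : K, c * p ^ 2 + (d - a) * p * q - b * q ^ 2 ≠ 0 := by
    by_contra! h
    -- otherwise `b = c = 0` and `a = d`, so `(x - y) ^ 2 = (a - d) ^ 2 + 4 * b * c = 0`
    have h₁ := h 1 0
    have h₂ := h 0 1
    have h₃ := h 1 1
    have : (x - y) ^ 2 = 0 := by
      linear_combination (x + y + a + d) * hsum - 4 * hprod + 4 * hdet
        + (d - a) * (h₃ - h₁ - h₂) + 4 * b * h₁
    exact hne (sub_eq_zero.1 (pow_eq_zero_iff two_ne_zero |>.1 this))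
  -- The columns of `P` are `(M - y) u` and `(M - x) u` for `u = (p, q)`: eigenvectors for `x` and
  -- `y` by Cayley–Hamilton, with determinant `D`.
  set D := (x - y) * (c * p ^ 2 + (d - a) * p * q - b * q ^ 2)
  have hD : D ≠ 0 := mul_ne_zero (sub_ne_zero.2 hne) hQ
  refine ⟨!![((a - y) * p + b * q) / D, (a - x) * p + b * q;
      (c * p + (d - y) * q) / D, c * p + (d - x) * q], ?_, ?_⟩
  · rw [Matrix.det_fin_two_of]
    field_simp
    ring
  · ext i j
    fin_cases i <;> fin_cases j <;>
      simp only [Fin.zero_eta, Fin.mk_one, Fin.isValue, Matrix.mul_apply, of_apply, cons_val',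
        cons_val_fin_one, cons_val_zero, cons_val_one, Fin.sum_univ_two, mul_zero, add_zero,
        zero_add] <;>
      field_simp
    · linear_combination -(a * p + b * q) * hsum - p * hdet + p * hprod
    · linear_combination -(a * p + b * q) * hsum - p * hdet + p * hprod
    · linear_combination -(c * p + d * q) * hsum - q * hdet + q * hprod
    · linear_combination -(c * p + d * q) * hsum - q * hdet + q * hprod

theorem exists_eq_mul_A_mul_inv (γ : SL(2, ℝ))
    (ht : 2 < trace (γ : Matrix (Fin 2) (Fin 2) ℝ)) :
    ∃ (g : SL(2, ℝ)) (l : ℝ), 0 < l ∧ γ = g * A l * g⁻¹ := by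
  obtain ⟨l, hl, hcosh⟩ :
      ∃ l : ℝ, 0 < l ∧ 2 * cosh (l / 2) = trace (γ : Matrix (Fin 2) (Fin 2) ℝ) :=
    ⟨2 * arcosh (trace (γ : Matrix (Fin 2) (Fin 2) ℝ) / 2),
      mul_pos two_pos (arcosh_pos (by linarith)),
      by rw [mul_div_cancel_left₀ _ two_ne_zero, cosh_arcosh (by linarith)]; ring⟩
  obtain ⟨P, hPdet, hP⟩ := exists_det_eq_one_mul_eq_mul_diag _ γ.det_coe
    (x := exp (l / 2)) (y := exp (-(l / 2))) (by rw [← exp_add, add_neg_cancel, exp_zero])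
    (by rw [← hcosh, cosh_eq]; ring)
    (exp_injective.ne (by linarith))
  exact ⟨⟨P, hPdet⟩, l, hl, eq_mul_inv_of_mul_eq (Subtype.ext hP)⟩

lemma specialLinearGroup_neg_smul (g : SL(2, ℝ)) (z : ℍ) : (-g) • z = g • z := by
  change SpecialLinearGroup.mapGL ℝ (-g) • z = SpecialLinearGroup.mapGL ℝ g • z
  rw [← UpperHalfPlane.neg_smul]
  congr 1
  ext i j
  simp

theorem IsHyperbolic.exists_smul_eq_conj_A_smul {γ : SL(2, ℝ)} (hγ : IsHyperbolic γ) :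
    ∃ (g : SL(2, ℝ)) (l : ℝ), 0 < l ∧
      ∀ z : ℍ, γ • z = g • A l • g⁻¹ • z := by
  rcases lt_abs.1 hγ with ht | ht
  · obtain ⟨g, l, hl, rfl⟩ := exists_eq_mul_A_mul_inv γ ht
    exact ⟨g, l, hl, fun z => by rw [mul_smul, mul_smul]⟩
  · obtain ⟨g, l, hl, hγ⟩ := exists_eq_mul_A_mul_inv (-γ)
      (by rwa [Matrix.SpecialLinearGroup.coe_neg, Matrix.trace_neg])
    exact ⟨g, l, hl, fun z => by rw [← specialLinearGroup_neg_smul, hγ, mul_smul, mul_smul]⟩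

section Conj

variable {γ δ g : SL(2, ℝ)}

lemma dist_smul_eq_of_conj (h : ∀ z : ℍ, γ • z = g • δ • g⁻¹ • z) (z : ℍ) :
    dist z (γ • z) = dist (g⁻¹ • z) (δ • g⁻¹ • z) := by
  rw [h, ← dist_smul g⁻¹, inv_smul_smul]

lemma transLength_eq_of_conj (h : ∀ z : ℍ, γ • z = g • δ • g⁻¹ • z) :
    transLength γ = transLength δ := by
  simp only [transLength, dist_smul_eq_of_conj h]
  exact (MulAction.surjective g⁻¹).iInf_comp fun z => dist z (δ • z)

lemma inv_smul_mem_axis_of_conj (h : ∀ z : ℍ, γ • z = g • δ • g⁻¹ • z) {w : ℍ}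
    (hw : w ∈ Axis γ) : g⁻¹ • w ∈ Axis δ := by
  change dist _ _ = _
  rwa [← dist_smul_eq_of_conj h, ← transLength_eq_of_conj h]

end Conj

lemma coe_A_smul (l : ℝ) (z : ℍ) : ((A l • z : ℍ) : ℂ) = (exp l : ℂ) * z := by
  rw [coe_specialLinearGroup_apply]
  simp only [Algebra.algebraMap_self, A, Fin.isValue, of_apply, cons_val', cons_val_zero,
    cons_val_fin_one, ringHom_apply, Complex.ofReal_exp, Complex.ofReal_div, Complex.ofReal_ofNat,
    cons_val_one, Complex.ofReal_zero, add_zero, zero_mul, Complex.ofReal_neg, zero_add]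
  rw [div_eq_iff (Complex.exp_ne_zero _), mul_right_comm, ← Complex.exp_add]
  ring_nf

lemma dist_A_smul {l : ℝ} (hl : 0 ≤ l) (z : ℍ) :
    dist z (A l • z) = 2 * arsinh (‖(z : ℂ)‖ / z.im * sinh (l / 2)) := by
  have hexp : exp l = exp (l / 2) ^ 2 := by rw [sq, ← exp_add, add_halves]
  have him : (A l • z).im = exp l * z.im := by
    rw [← coe_im, coe_A_smul]
    simp [Complex.exp_ofReal_re]
  have hnum : dist (z : ℂ) (A l • z : ℍ) = ‖(z : ℂ)‖ * (exp l - 1) := by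
    rw [coe_A_smul, dist_comm, Complex.dist_eq, ← sub_one_mul, norm_mul, mul_comm,
      ← Complex.ofReal_one, ← Complex.ofReal_sub, Complex.norm_real,
      Real.norm_of_nonneg (by linarith [one_le_exp hl])]
  have hden : √(z.im * (A l • z).im) = z.im * exp (l / 2) := by
    rw [him, hexp, show z.im * (exp (l / 2) ^ 2 * z.im) = (z.im * exp (l / 2)) ^ 2 by ring]
    exact sqrt_sq (by positivity)
  rw [UpperHalfPlane.dist_eq, hnum, hden, sinh_eq, Real.exp_neg, hexp]
  field_simp

lemma one_le_norm_div_im (z : ℍ) : 1 ≤ ‖(z : ℂ)‖ / z.im :=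
  (one_le_div z.im_pos).2 (Complex.im_le_norm z)

lemma transLength_A {l : ℝ} (hl : 0 ≤ l) : transLength (A l) = l := by
  have hleast : IsLeast (Set.range fun z : ℍ => dist z (A l • z)) l := by
    refine ⟨⟨I, ?_⟩, ?_⟩
    · change dist I (A l • I) = l
      rw [dist_A_smul hl]
      simp only [coe_I, Complex.norm_I, I_im, div_one, one_mul, arsinh_sinh]
      ring
    · rintro _ ⟨z, rfl⟩
      calc l = 2 * arsinh (1 * sinh (l / 2)) := by rw [one_mul, arsinh_sinh]; ring
        _ ≤ dist z (A l • z) := by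
          rw [dist_A_smul hl]
          gcongr
          exact one_le_norm_div_im z
  exact hleast.isGLB.ciInf_eq

lemma re_eq_zero_of_mem_axis_A {l : ℝ} (hl : 0 < l) {w : ℍ} (hw : w ∈ Axis (A l)) :
    w.re = 0 := by
  have hs : 0 < sinh (l / 2) := sinh_pos_iff.2 (by linarith)
  have hq : ‖(w : ℂ)‖ / w.im = 1 := by
    change dist _ _ = _ at hw
    rw [transLength_A hl.le, dist_A_smul hl.le] at hw
    refine (mul_eq_right₀ hs.ne').1 (arsinh_injective ?_)
    rw [arsinh_sinh]
    linarith
  rw [div_eq_one_iff_eq w.im_pos.ne'] at hq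
  exact Complex.abs_im_eq_norm.1 (by rw [hq, coe_im, abs_of_pos w.im_pos])

lemma norm_div_im_le_cosh_dist {w : ℍ} (hw : w.re = 0) (z : ℍ) :
    ‖(z : ℂ)‖ / z.im ≤ cosh (dist z w) := by
  have hre := Complex.sq_norm_sub_sq_im (z : ℂ)
  rw [coe_re, coe_im] at hre
  rw [cosh_dist', hw, sub_zero, show z.re ^ 2 + z.im ^ 2 = ‖(z : ℂ)‖ ^ 2 by linarith,
    div_le_div_iff₀ z.im_pos (by positivity)]
  nlinarith [mul_nonneg z.im_pos.le (sq_nonneg (‖(z : ℂ)‖ - w.im))]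

lemma cosh_one_le_two : cosh 1 ≤ 2 := by
  rw [cosh_eq]
  linarith [exp_one_lt_d9, exp_le_one_iff.2 (show (-1 : ℝ) ≤ 0 by norm_num)]

lemma arsinh_mul_sinh_half_le {q l : ℝ} (hq : q ≤ 2) (hl : 0 ≤ l) :
    arsinh (q * sinh (l / 2)) ≤ l := by
  have hs : 0 ≤ sinh (l / 2) := sinh_nonneg_iff.2 (by linarith)
  calc arsinh (q * sinh (l / 2)) ≤ arsinh (sinh l) := by
        rw [arsinh_le_arsinh]
        calc q * sinh (l / 2) ≤ 2 * sinh (l / 2) := by gcongr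
          _ ≤ 2 * sinh (l / 2) * cosh (l / 2) :=
            le_mul_of_one_le_right (by positivity) (one_le_cosh _)
          _ = sinh l := by rw [← sinh_two_mul]; ring_nf
    _ = l := arsinh_sinh l

lemma dist_A_smul_le_of_near_axis {l : ℝ} (hl : 0 < l) {z w : ℍ} (hw : w ∈ Axis (A l))
    (hzw : dist z w ≤ 1) : dist z (A l • z) ≤ 2 * l := by
  rw [dist_A_smul hl.le]
  gcongr
  refine arsinh_mul_sinh_half_le ?_ hl.le
  calc ‖(z : ℂ)‖ / z.im ≤ cosh (dist z w) :=
        norm_div_im_le_cosh_dist (re_eq_zero_of_mem_axis_A hl hw) z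
    _ ≤ cosh 1 := cosh_le_cosh.2 (by rwa [abs_of_nonneg dist_nonneg, abs_one])
    _ ≤ 2 := cosh_one_le_two

theorem displacement_near_axis
    (γ : SL(2, ℝ)) (hγ : IsHyperbolic γ) (z : ℍ)
    (h : ∃ w ∈ Axis γ, dist z w ≤ 1) :
    dist z (γ • z : ℍ) ≤ 2 * transLength γ := by
  obtain ⟨g, l, hl, hconj⟩ := hγ.exists_smul_eq_conj_A_smul
  obtain ⟨w, hw, hzw⟩ := h
  rw [dist_smul_eq_of_conj hconj, transLength_eq_of_conj hconj, transLength_A hl.le]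
  exact dist_A_smul_le_of_near_axis hl (inv_smul_mem_axis_of_conj hconj hw)
    (by rwa [dist_smul])

end BellisFormal
end
end

section
/- Let γ = !![a,b;c,d] ∈ SL(2,ℝ) be hyperbolic with two real fixed points γ⁻ < 0 < γ⁺, let v ∈ SL(2,ℝ) satisfy v • i = i and lim_{t→+∞} v • (eᵗ i) = a/c in ℂ, and let τ := − Real.log (Im (γ⁻¹ • i)). Then the vector g_τ(v) lies on the horocyclic orbit of γ: there exist s ∈ ℝ and ε ∈ {1, −1} such that v * A(τ) = ε • (γ * N(s)). -/
/-!
Since `v` fixes `i` it is a rotation, with first column a unit vector `(x, y)`, and `v • (eᵗ i)`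
tends to `x / y` as `t → ∞`; so `(x, y)` is parallel to the first column `(a, c)` of `γ`. As
`Im (γ⁻¹ • i) = 1 / (a² + c²)`, the flow time `τ` rescales `(x, y)` to `±(a, c)`: the
vectors `v * A τ` and `±γ` have the same first column, and two elements of `SL(2, ℝ)` with the
same first column differ by right multiplication by some `N s`.
-/

open UpperHalfPlane Matrix Real Filter Topology
open scoped MatrixGroups

noncomputable section

namespace BellisFormal

lemma smul_eq_mapGL_smul (g : SL(2, ℝ)) (z : ℍ) :
    g • z = (Matrix.SpecialLinearGroup.mapGL ℝ g) • z := rfl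

lemma smul_I_eq_I_iff {g : SL(2, ℝ)} : g • I = I ↔ g 0 0 = g 1 1 ∧ g 0 1 = -g 1 0 := by
  rw [smul_eq_mapGL_smul, gl_smul_I_eq_I_iff_of_pos (by simp)]
  simp

lemma coe_smul_eq (g : SL(2, ℝ)) (z : ℍ) :
    ((g • z : ℍ) : ℂ) = (g 0 0 * z + g 0 1) / (g 1 0 * z + g 1 1) := by
  simp [coe_specialLinearGroup_apply]

lemma im_smul_eq (g : SL(2, ℝ)) (z : ℍ) :
    (g • z).im = z.im / Complex.normSq (g 1 0 * z + g 1 1) := by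
  rw [smul_eq_mapGL_smul, im_smul_eq_div_normSq]
  simp [denom]

lemma im_inv_smul_I (g : SL(2, ℝ)) : (g⁻¹ • I).im = (g 0 0 ^ 2 + g 1 0 ^ 2)⁻¹ := by
  have h10 : g⁻¹ 1 0 = -g 1 0 := by simp [SpecialLinearGroup.SL2_inv_expl]
  have h11 : g⁻¹ 1 1 = g 0 0 := by simp [SpecialLinearGroup.SL2_inv_expl]
  rw [im_smul_eq, h10, h11, add_comm, coe_I, Complex.normSq_add_mul_I, I_im, one_div,
    neg_sq]

lemma tendsto_vray_atImInfty : Tendsto vray atTop atImInfty :=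
  tendsto_comap_iff.mpr Real.tendsto_exp_atTop

lemma sq_mul_im_le_norm (c d : ℝ) (z : ℍ) : c ^ 2 * z.im ≤ ‖c * (c * (z : ℂ) + d)‖ := by
  have him : (c * (z : ℂ) + d).im = c * z.im := by simp
  calc c ^ 2 * z.im = |c| * |(c * (z : ℂ) + d).im| := by
        rw [him, abs_mul, abs_of_pos z.im_pos, ← mul_assoc, ← sq, sq_abs]
    _ ≤ |c| * ‖c * (z : ℂ) + d‖ := by gcongr; exact Complex.abs_im_le_norm _
    _ = ‖c * (c * (z : ℂ) + d)‖ := by rw [norm_mul, Complex.norm_real, Real.norm_eq_abs]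

lemma coe_smul_sub_eq (g : SL(2, ℝ)) (hg : g 1 0 ≠ 0) (z : ℍ) :
    ((g • z : ℍ) : ℂ) - g 0 0 / g 1 0 = -(g 1 0 * (g 1 0 * (z : ℂ) + g 1 1))⁻¹ := by
  have hdet : (g 0 0 * g 1 1 - g 0 1 * g 1 0 : ℂ) = 1 := by
    exact_mod_cast (Matrix.det_fin_two (g : Matrix (Fin 2) (Fin 2) ℝ)).symm.trans g.det_coe
  have hden : ((z : ℂ) * g 1 0 + g 1 1) ≠ 0 := by
    intro h
    have := sq_mul_im_le_norm (g 1 0) (g 1 1) z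
    rw [mul_comm _ (z : ℂ), h, mul_zero, norm_zero] at this
    exact (by positivity : 0 < g 1 0 ^ 2 * z.im).not_ge this
  have hgC : (g 1 0 : ℂ) ≠ 0 := by exact_mod_cast hg
  rw [coe_smul_eq]
  field_simp
  linear_combination -hdet

lemma tendsto_coe_smul_atImInfty (g : SL(2, ℝ)) (hg : g 1 0 ≠ 0) :
    Tendsto (fun z : ℍ => ((g • z : ℍ) : ℂ)) atImInfty (𝓝 (g 0 0 / g 1 0)) := by
  rw [tendsto_iff_norm_sub_tendsto_zero]
  refine squeeze_zero (fun _ => norm_nonneg _) (g := fun z : ℍ => (g 1 0 ^ 2 * z.im)⁻¹) ?_ ?_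
  · intro z
    rw [coe_smul_sub_eq g hg, norm_neg, norm_inv]
    exact inv_anti₀ (by positivity) (sq_mul_im_le_norm _ _ z)
  · exact (tendsto_comap.const_mul_atTop (by positivity)).inv_tendsto_atTop

lemma exists_eq_mul_N_of_col_eq {g h : SL(2, ℝ)} (h0 : h 0 0 = g 0 0) (h1 : h 1 0 = g 1 0) :
    ∃ s, h = g * N s := by
  -- the `(0, 1)` entry of `g⁻¹ * h`
  refine ⟨g 1 1 * h 0 1 - g 0 1 * h 1 1, ?_⟩
  have hg := g.det_coe
  have hh := h.det_coe
  rw [Matrix.det_fin_two, h0, h1] at hh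
  rw [Matrix.det_fin_two] at hg
  ext i j
  change _ = ((g : Matrix (Fin 2) (Fin 2) ℝ) * N _) i j
  fin_cases i <;> fin_cases j <;>
    simp only [N, Matrix.mul_apply, Fin.sum_univ_two, of_apply, cons_val', cons_val_zero,
      cons_val_one, cons_val_fin_one, mul_one, mul_zero, add_zero, Fin.isValue, Fin.zero_eta,
      Fin.mk_one]
  · exact h0
  · linear_combination -h 0 1 * hg + g 0 1 * hh
  · exact h1
  · linear_combination -h 1 1 * hg + g 1 1 * hh

lemma exists_sign_mul_eq_of_unit_of_parallel {x y a c p : ℝ} (hxy : x ^ 2 + y ^ 2 = 1)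
    (hpar : c * x = a * y) (hp : p ^ 2 = a ^ 2 + c ^ 2) :
    ∃ σ : ℝ, (σ = 1 ∨ σ = -1) ∧ p * x = σ * a ∧ p * y = σ * c := by
  have hx : x * (a * x + c * y) = a := by linear_combination a * hxy + y * hpar
  have hy : y * (a * x + c * y) = c := by linear_combination c * hxy - x * hpar
  have he : (a * x + c * y) ^ 2 = p ^ 2 := by
    linear_combination (a ^ 2 + c ^ 2) * hxy - (c * x - a * y) * hpar - hp
  rcases sq_eq_sq_iff_eq_or_eq_neg.mp he with h | h
  · exact ⟨1, Or.inl rfl, by linear_combination hx - x * h, by linear_combination hy - y * h⟩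
  · exact ⟨-1, Or.inr rfl, by linear_combination x * h - hx, by linear_combination y * h - hy⟩

lemma exists_eq_sign_mul_mul_N {g h : SL(2, ℝ)} {σ : ℝ} (hσ : σ = 1 ∨ σ = -1)
    (h0 : h 0 0 = σ * g 0 0) (h1 : h 1 0 = σ * g 1 0) :
    ∃ s : ℝ, ∃ ε : SL(2, ℝ), (ε = 1 ∨ ε = -1) ∧ h = ε * (g * N s) := by
  rcases hσ with rfl | rfl
  · obtain ⟨s, hs⟩ := exists_eq_mul_N_of_col_eq (g := g) (h := h)
      (by simpa using h0) (by simpa using h1)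
    exact ⟨s, 1, Or.inl rfl, by rw [hs, one_mul]⟩
  · obtain ⟨s, hs⟩ := exists_eq_mul_N_of_col_eq (g := -g) (h := h)
      (by simpa using h0) (by simpa using h1)
    exact ⟨s, -1, Or.inr rfl, by rw [hs, neg_mul, neg_one_mul]⟩

lemma mul_A_apply_zero (g : SL(2, ℝ)) (t : ℝ) (i : Fin 2) :
    (g * A t) i 0 = Real.exp (t / 2) * g i 0 := by
  change ((g : Matrix (Fin 2) (Fin 2) ℝ) * A t) i 0 = _
  fin_cases i <;> simp [A, Matrix.mul_apply, Fin.sum_univ_two, mul_comm]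

theorem winding_lands_on_horocyclic_orbit_general
    (γ : SL(2, ℝ)) (hc : γ 1 0 ≠ 0)
    (v : SL(2, ℝ)) (hv0 : v • (UpperHalfPlane.I : ℍ) = UpperHalfPlane.I)
    (hvend : Tendsto (fun t : ℝ => ((v • vray t : ℍ) : ℂ)) atTop
      (nhds ((γ 0 0 / γ 1 0 : ℝ) : ℂ)))
    (τ : ℝ) (hτ : τ = - Real.log ((γ⁻¹ • (UpperHalfPlane.I : ℍ)).im)) :
    ∃ s : ℝ, ∃ ε : SL(2, ℝ), (ε = 1 ∨ ε = -1) ∧ v * A τ = ε * (γ * N s) := by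
  obtain ⟨hv11, hv01⟩ := smul_I_eq_I_iff.mp hv0
  have hunit : v 0 0 ^ 2 + v 1 0 ^ 2 = 1 := by
    have := v.det_coe
    rw [Matrix.det_fin_two, ← hv11, hv01] at this
    linear_combination this
  -- otherwise `v` preserves `atImInfty`, and `Im (v • vray t)` would be unbounded
  have hv10 : v 1 0 ≠ 0 := fun h =>
    not_tendsto_nhds_of_tendsto_atTop
      (tendsto_comap_iff.mp ((tendsto_smul_atImInfty h).comp tendsto_vray_atImInfty)) _
      ((Complex.continuous_im.tendsto _).comp hvend)
  have hpar : γ 1 0 * v 0 0 = γ 0 0 * v 1 0 := by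
    have := tendsto_nhds_unique hvend
      ((tendsto_coe_smul_atImInfty v hv10).comp tendsto_vray_atImInfty)
    rw [Complex.ofReal_div, div_eq_div_iff (by exact_mod_cast hc) (by exact_mod_cast hv10)]
      at this
    norm_cast at this
    linear_combination -this
  have hexp : Real.exp (τ / 2) ^ 2 = γ 0 0 ^ 2 + γ 1 0 ^ 2 := by
    rw [← Real.exp_nat_mul, hτ, im_inv_smul_I, Real.log_inv, neg_neg, Nat.cast_ofNat,
      mul_div_cancel₀ _ two_ne_zero, Real.exp_log (by positivity)]
  obtain ⟨σ, hσ, h0, h1⟩ := exists_sign_mul_eq_of_unit_of_parallel hunit hpar hexp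
  exact exists_eq_sign_mul_mul_N hσ (by rw [mul_A_apply_zero, h0])
    (by rw [mul_A_apply_zero, h1])

theorem winding_lands_on_horocyclic_orbit
    (γ : SL(2, ℝ)) (hγ : IsHyperbolic γ)
    (xm xp : ℝ) (hfm : IsFixedPt γ xm) (hfp : IsFixedPt γ xp)
    (hm : xm < 0) (hp : 0 < xp) (hc : γ 1 0 ≠ 0)
    (v : SL(2, ℝ)) (hv0 : v • (UpperHalfPlane.I : ℍ) = UpperHalfPlane.I)
    (hvend : Tendsto (fun t : ℝ => ((v • vray t : ℍ) : ℂ)) atTop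
      (nhds ((γ 0 0 / γ 1 0 : ℝ) : ℂ)))
    (τ : ℝ) (hτ : τ = - Real.log ((γ⁻¹ • (UpperHalfPlane.I : ℍ)).im)) :
    ∃ s : ℝ, ∃ ε : SL(2, ℝ), (ε = 1 ∨ ε = -1) ∧ v * A τ = ε * (γ * N s) :=
  winding_lands_on_horocyclic_orbit_general γ hc v hv0 hvend τ hτ

end BellisFormal
end
end

section
/- Let (α_n)_{n≥0} be a nested sequence in SL(2,ℝ) and set β_n := α_0 * α_1 * ⋯ * α_n. Then for every n the (1,0)-entry (β_n)₁₀ is nonzero, the real numbers x_n := (β_n)₀₀ / (β_n)₁₀ (the images of ∞ under the Möbius maps of β_n) are all positive, the sequence (x_n) is strictly decreasing, and (x_n) converges to a limit in ℝ. -/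
open UpperHalfPlane Matrix Real Filter Topology
open scoped MatrixGroups

noncomputable section

namespace BellisFormal

/-! If `m < 0 < p` are the repelling and attracting fixed points of `g = !![a, b; c, d]`,
with eigenvalues `u = c p + d` and `1 / u`, then `(p - m) • g` has entries `p u - m / u`,
`-p m (u - 1 / u)`, `u - 1 / u`, `p / u - m u`, all of the sign of `u` since `u² > 1`. So each
`α n`, and hence each product `β n`, is entrywise positive up to sign. For such `β` and `α` with
`det β = 1`, `β₀₀ / β₁₀ - (β α)₀₀ / (β α)₁₀ = α₁₀ / (β₁₀ (β α)₁₀) > 0`: the `x n` are positive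
and strictly decreasing, hence convergent. -/

section EntrywisePositive

variable {R : Type*} [Ring R] [PartialOrder R] {l m n : Type*}

def EntrywisePos (M : Matrix m n R) : Prop := ∀ i j, 0 < M i j

def EntrywisePosOrNeg (M : Matrix m n R) : Prop := EntrywisePos M ∨ EntrywisePos (-M)

theorem EntrywisePos.mul [IsStrictOrderedRing R] [Fintype m] [Nonempty m]
    {M : Matrix l m R} {N : Matrix m n R}
    (hM : EntrywisePos M) (hN : EntrywisePos N) : EntrywisePos (M * N) := fun i j =>
  Finset.sum_pos (fun k _ => mul_pos (hM i k) (hN k j)) Finset.univ_nonempty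

theorem EntrywisePosOrNeg.mul [IsStrictOrderedRing R] [Fintype m] [Nonempty m]
    {M : Matrix l m R} {N : Matrix m n R}
    (hM : EntrywisePosOrNeg M) (hN : EntrywisePosOrNeg N) : EntrywisePosOrNeg (M * N) := by
  rcases hM with hM | hM <;> rcases hN with hN | hN
  · exact Or.inl (hM.mul hN)
  · exact Or.inr (by simpa using hM.mul hN)
  · exact Or.inr (by simpa using hM.mul hN)
  · exact Or.inl (by simpa using hM.mul hN)

theorem EntrywisePosOrNeg.ne_zero {M : Matrix m n R} (hM : EntrywisePosOrNeg M)
    (i : m) (j : n) : M i j ≠ 0 := by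
  rcases hM with hM | hM
  · exact (hM i j).ne'
  · simpa using (hM i j).ne'

end EntrywisePositive

section ImageOfInfty

variable {K : Type*} [Field K]

def imageOfInfty (M : Matrix (Fin 2) (Fin 2) K) : K := M 0 0 / M 1 0

theorem imageOfInfty_neg (M : Matrix (Fin 2) (Fin 2) K) : imageOfInfty (-M) = imageOfInfty M :=
  neg_div_neg_eq _ _

theorem EntrywisePosOrNeg.imageOfInfty_pos [LinearOrder K] [IsStrictOrderedRing K]
    {M : Matrix (Fin 2) (Fin 2) K}
    (hM : EntrywisePosOrNeg M) : 0 < imageOfInfty M := by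
  rcases hM with hM | hM
  · exact div_pos (hM 0 0) (hM 1 0)
  · rw [← imageOfInfty_neg]; exact div_pos (hM 0 0) (hM 1 0)

theorem EntrywisePos.imageOfInfty_mul_lt [LinearOrder K] [IsStrictOrderedRing K]
    {M N : Matrix (Fin 2) (Fin 2) K}
    (hM : EntrywisePos M) (hN : EntrywisePos N) (hdet : 0 < M.det) :
    imageOfInfty (M * N) < imageOfInfty M := by
  rw [imageOfInfty, imageOfInfty, div_lt_div_iff₀ ((hM.mul hN) 1 0) (hM 1 0)]
  simp only [Matrix.mul_apply, Fin.sum_univ_two]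
  rw [Matrix.det_fin_two] at hdet
  nlinarith [mul_pos (hN 1 0) hdet]

theorem EntrywisePosOrNeg.imageOfInfty_mul_lt [LinearOrder K] [IsStrictOrderedRing K]
    {M N : Matrix (Fin 2) (Fin 2) K}
    (hM : EntrywisePosOrNeg M) (hN : EntrywisePosOrNeg N) (hdet : 0 < M.det) :
    imageOfInfty (M * N) < imageOfInfty M := by
  have hdet' : 0 < (-M).det := by simpa [Matrix.det_neg] using hdet
  rcases hM with hM | hM <;> rcases hN with hN | hN
  · exact hM.imageOfInfty_mul_lt hN hdet
  · simpa [imageOfInfty_neg] using hM.imageOfInfty_mul_lt hN hdet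
  · simpa [imageOfInfty_neg] using hM.imageOfInfty_mul_lt hN hdet'
  · simpa [imageOfInfty_neg] using hM.imageOfInfty_mul_lt hN hdet'

end ImageOfInfty

theorem mul_pos_of_fixedPts {a b c d p m : ℝ} (hdet : a * d - b * c = 1)
    (hQp : c * p ^ 2 + (d - a) * p - b = 0) (hQm : c * m ^ 2 + (d - a) * m - b = 0)
    (hu : 1 < (c * p + d) ^ 2) (hp : 0 < p) (hm : m < 0) :
    0 < a * (c * p + d) ∧ 0 < b * (c * p + d) ∧ 0 < c * (c * p + d) ∧ 0 < d * (c * p + d) := by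
  have hδ : 0 < p - m := by linarith
  -- `c * p + d` and `c * m + d` are the eigenvalues of `!![a, b; c, d]` on `(p, 1)` and `(m, 1)`
  have huv : (c * p + d) * (c * m + d) = 1 := by
    refine mul_right_cancel₀ hδ.ne' ?_
    linear_combination (c * m + d) * hQp - (c * p + d) * hQm + (p - m) * hdet
  have ha : (p - m) * (a * (c * p + d)) = p * (c * p + d) ^ 2 - m := by
    linear_combination (-(c * p + d)) * hQp + (c * p + d) * hQm - m * huv
  have hb : (p - m) * (b * (c * p + d)) = -(p * m) * ((c * p + d) ^ 2 - 1) := by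
    linear_combination (c * p + d) * (m * hQp - p * hQm) + p * m * huv
  have hc : (p - m) * (c * (c * p + d)) = (c * p + d) ^ 2 - 1 := by linear_combination -huv
  have hd : (p - m) * (d * (c * p + d)) = p - m * (c * p + d) ^ 2 := by
    linear_combination p * huv
  refine ⟨?_, ?_, ?_, ?_⟩ <;> refine pos_of_mul_pos_right ?_ hδ.le
  · rw [ha]; nlinarith
  · rw [hb]; nlinarith [mul_neg_of_pos_of_neg hp hm]
  · rw [hc]; linarith
  · rw [hd]; nlinarith

theorem IsAttractingFixedPt.entrywisePosOrNeg {g : SL(2, ℝ)} {p m : ℝ}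
    (hp : IsAttractingFixedPt g p) (hm : IsFixedPt g m) (hp0 : 0 < p) (hm0 : m < 0) :
    EntrywisePosOrNeg (g : Matrix (Fin 2) (Fin 2) ℝ) := by
  have hdet : g 0 0 * g 1 1 - g 0 1 * g 1 0 = 1 := by
    rw [← Matrix.det_fin_two]; exact g.det_coe
  obtain ⟨ha, hb, hc, hd⟩ := mul_pos_of_fixedPts hdet hp.1 hm hp.2 hp0 hm0
  have hu0 : g 1 0 * p + g 1 1 ≠ 0 := fun h0 => by
    have hu2 := hp.2; norm_num [h0] at hu2
  rcases hu0.lt_or_gt with hu | hu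
  · refine Or.inr fun i j => ?_
    fin_cases i <;> fin_cases j <;> simp only [Matrix.neg_apply, neg_pos]
    exacts [neg_of_mul_pos_left ha hu.le, neg_of_mul_pos_left hb hu.le,
      neg_of_mul_pos_left hc hu.le, neg_of_mul_pos_left hd hu.le]
  · refine Or.inl fun i j => ?_
    fin_cases i <;> fin_cases j
    exacts [pos_of_mul_pos_left ha hu.le, pos_of_mul_pos_left hb hu.le,
      pos_of_mul_pos_left hc hu.le, pos_of_mul_pos_left hd hu.le]

theorem seqProd_zero (α : ℕ → SL(2, ℝ)) : seqProd α 0 = α 0 := by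
  simp [seqProd]

theorem seqProd_succ (α : ℕ → SL(2, ℝ)) (n : ℕ) :
    seqProd α (n + 1) = seqProd α n * α (n + 1) := by
  simp [seqProd, List.range_succ, mul_assoc]

theorem IsNestedSequence.entrywisePosOrNeg {α : ℕ → SL(2, ℝ)} {γp γm t : ℕ → ℝ}
    (h : IsNestedSequence α γp γm t) (n : ℕ) :
    EntrywisePosOrNeg (α n : Matrix (Fin 2) (Fin 2) ℝ) :=
  (h.attracting n).entrywisePosOrNeg (h.repelling n).1 (h.plus_pos n) (h.minus_neg n)

theorem IsNestedSequence.entrywisePosOrNeg_seqProd {α : ℕ → SL(2, ℝ)} {γp γm t : ℕ → ℝ}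
    (h : IsNestedSequence α γp γm t) (n : ℕ) :
    EntrywisePosOrNeg (seqProd α n : Matrix (Fin 2) (Fin 2) ℝ) := by
  induction n with
  | zero => rw [seqProd_zero]; exact h.entrywisePosOrNeg 0
  | succ n ih =>
    rw [seqProd_succ, Matrix.SpecialLinearGroup.coe_mul]
    exact ih.mul (h.entrywisePosOrNeg (n + 1))

theorem nested_products_image_of_infty_converges
    (α : ℕ → SL(2, ℝ)) (γp γm tax : ℕ → ℝ) (h : IsNestedSequence α γp γm tax) :
    (∀ n, seqProd α n 1 0 ≠ 0) ∧
    (∀ n, 0 < seqProd α n 0 0 / seqProd α n 1 0) ∧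
    StrictAnti (fun n => seqProd α n 0 0 / seqProd α n 1 0) ∧
    ∃ L : ℝ, Tendsto (fun n => seqProd α n 0 0 / seqProd α n 1 0) atTop (nhds L) := by
  have hβ := h.entrywisePosOrNeg_seqProd
  have hanti : StrictAnti fun n => imageOfInfty (seqProd α n : Matrix (Fin 2) (Fin 2) ℝ) :=
    strictAnti_nat_of_succ_lt fun n => by
      rw [seqProd_succ, Matrix.SpecialLinearGroup.coe_mul]
      exact (hβ n).imageOfInfty_mul_lt (h.entrywisePosOrNeg (n + 1))
        (by rw [(seqProd α n).det_coe]; exact one_pos)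
  refine ⟨fun n => (hβ n).ne_zero 1 0, fun n => (hβ n).imageOfInfty_pos, hanti, _,
    tendsto_atTop_ciInf hanti.antitone ⟨0, ?_⟩⟩
  rintro _ ⟨n, rfl⟩
  exact (hβ n).imageOfInfty_pos.le

end BellisFormal
end
end

section
/- For every u ∈ SL(2,ℝ), every s ∈ ℝ and every t ∈ ℝ, d₁( u * N(s) * A(t), u * A(t) ) ≤ |s| · (e^{−t} + e^{−(t+1)}). (Quantitative contraction of horocyclic displacement under the geodesic flow: d₁(g_t h_s u, g_t u) ≤ |s|(e^{−t} + e^{−(t+1)}).) -/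
open UpperHalfPlane Matrix Real Filter Topology
open scoped MatrixGroups

noncomputable section

namespace BellisFormal

/-!
`N s * A t` first moves `eʳ i` up to `eᵗ⁺ʳ i` and then translates it horizontally by `s`. A
horizontal translation by `s` moves a point at height `y` a hyperbolic distance at most `|s| / y`,
and the left factor `u` acts by isometries, so it does not change the distances in `d₁`.
-/

theorem UpperHalfPlane.dist_real_vadd_le (a : ℝ) (z : ℍ) : dist (a +ᵥ z) z ≤ |a| / z.im :=
  calc dist (a +ᵥ z) z ≤ dist ((a +ᵥ z : ℍ) : ℂ) z / √((a +ᵥ z).im * z.im) :=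
        dist_le_dist_coe_div_sqrt _ _
    _ = |a| / z.im := by
      rw [vadd_im, Real.sqrt_mul_self z.im_pos.le, coe_vadd, dist_add_self_left,
        Complex.norm_real, Real.norm_eq_abs]

theorem N_smul_eq_vadd (s : ℝ) (z : ℍ) : N s • z = s +ᵥ z := by
  ext1
  rw [coe_specialLinearGroup_apply, coe_vadd]
  simp [N, add_comm]

theorem A_smul_vray (t r : ℝ) : A t • vray r = vray (t + r) := by
  ext1
  rw [coe_specialLinearGroup_apply]
  simp [A, vray, Complex.ext_iff, -Complex.ofReal_exp]
  rw [Real.exp_neg, div_inv_eq_mul, ← Real.exp_add, ← Real.exp_add]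
  ring_nf

theorem dist_N_mul_A_smul_vray_le (s t r : ℝ) :
    dist ((N s * A t) • vray r) (A t • vray r) ≤ |s| * Real.exp (-(t + r)) := by
  rw [mul_smul, N_smul_eq_vadd, A_smul_vray, Real.exp_neg, ← div_eq_mul_inv]
  exact UpperHalfPlane.dist_real_vadd_le s _

theorem horocyclic_contraction
    (u : SL(2, ℝ)) (s t : ℝ) :
    d1 (u * N s * A t) (u * A t) ≤ |s| * (Real.exp (-t) + Real.exp (-(t + 1))) := by
  have h := add_le_add (dist_N_mul_A_smul_vray_le s t 0) (dist_N_mul_A_smul_vray_le s t 1)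
  simpa only [d1, mul_assoc, mul_smul u, dist_smul, add_zero, mul_add] using h

end BellisFormal
end
end

section
/- Let σ, σ' : ℝ → ℍ be isometries (unit-speed geodesics of the hyperbolic plane, i.e. dist(σ s, σ t) = |s − t| and likewise for σ') with σ(0) = σ'(0). Then the function t ↦ dist(σ(t), σ'(t)) is monotone nondecreasing on [0, +∞). -/
open UpperHalfPlane Matrix Real Filter Topology
open scoped MatrixGroups

noncomputable section

namespace BellisFormal

/-!
Map `ℍ` onto the hyperboloid `{X | ⟪X, X⟫ = 1}` of the Minkowski form of signature `(1, 2)`,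
on which `cosh (dist z w) = ⟪z, w⟫`. A unit-speed geodesic through `p` then becomes
`t ↦ cosh t • p + sinh t • v` for a unit space-like `v ⟂ p`, so two geodesics issuing from `p`
satisfy `cosh (dist (σ t) (σ' t)) = 1 - sinh² t · ⟪v - v', v - v'⟫ / 2`. Since the form is
negative definite on `p⟂`, this is nondecreasing in `t ≥ 0`.
-/

theorem monotoneOn_of_monotoneOn_cosh_comp {f : ℝ → ℝ} {s : Set ℝ} (hf : ∀ t, 0 ≤ f t)
    (h : MonotoneOn (cosh ∘ f) s) : MonotoneOn f s := fun a ha b hb hab => by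
  simpa only [abs_of_nonneg (hf _)] using cosh_le_cosh.mp (h ha hb hab)

section BilinForm

variable {V : Type*} [AddCommGroup V] [Module ℝ V] (B : LinearMap.BilinForm ℝ V)

theorem exists_eq_cosh_smul_add_sinh_smul {x : ℝ → V}
    (hx : ∀ s t, B (x s) (x t) = cosh (s - t))
    (hdef : ∀ u, B (x 0) u = 0 → u ≠ 0 → B u u < 0) :
    ∃ v, B (x 0) v = 0 ∧ B v v = -1 ∧ ∀ t, x t = cosh t • x 0 + sinh t • v := by
  have hS : sinh 1 ≠ 0 := (sinh_pos_iff.mpr one_pos).ne'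
  -- `v` is forced by the claimed formula at `t = 1`.
  set v := (sinh 1)⁻¹ • (x 1 - cosh 1 • x 0) with hv
  have hx0v : B (x 0) v = 0 := by
    simp only [hv, map_smul, map_sub, smul_eq_mul, hx, sub_self, zero_sub, cosh_neg, cosh_zero]
    ring
  refine ⟨v, hx0v, ?_, fun t => ?_⟩
  · simp only [hv, map_smul, map_sub, LinearMap.smul_apply, LinearMap.sub_apply, smul_eq_mul, hx,
      sub_self, sub_zero, zero_sub, cosh_neg, cosh_zero]
    field_simp
    linear_combination -cosh_sq_sub_sinh_sq 1
  set w := x t - cosh t • x 0 - sinh t • v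
  have hw0 : B (x 0) w = 0 := by
    simp only [w, map_smul, map_sub, hx0v, smul_eq_mul, hx, sub_self, zero_sub, cosh_neg, cosh_zero]
    ring
  have hww : B w w = 0 := by
    simp only [w, hv, map_smul, map_sub, LinearMap.smul_apply, LinearMap.sub_apply, smul_eq_mul, hx,
      sub_self, sub_zero, zero_sub, cosh_neg, cosh_zero, cosh_sub]
    field_simp
    linear_combination (-(sinh t ^ 2)) * cosh_sq_sub_sinh_sq 1 - sinh 1 ^ 2 * cosh_sq_sub_sinh_sq t
  have hw : w = 0 := by
    by_contra hne
    exact (hdef w hw0 hne).ne hww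
  rw [← sub_eq_zero, ← sub_sub]
  exact hw

variable {B}

theorem apply_cosh_smul_add_sinh_smul (hB : B.IsSymm) {p v v' : V} (hp : B p p = 1)
    (hv : B p v = 0) (hv' : B p v' = 0) (hvv : B v v = -1) (hv'v' : B v' v' = -1) (t : ℝ) :
    B (cosh t • p + sinh t • v) (cosh t • p + sinh t • v') =
      1 - sinh t ^ 2 * B (v - v') (v - v') / 2 := by
  have hvp : B v p = 0 := by rw [← hB.eq, hv]
  have hv'v : B v' v = B v v' := hB.eq v' v
  simp only [map_add, map_sub, map_smul, LinearMap.add_apply, LinearMap.sub_apply,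
    LinearMap.smul_apply, smul_eq_mul, hp, hv', hvp, hvv, hv'v', hv'v]
  linear_combination cosh_sq_sub_sinh_sq t

theorem monotoneOn_apply_cosh_smul_add_sinh_smul (hB : B.IsSymm) {p v v' : V}
    (hdef : ∀ u, B p u = 0 → u ≠ 0 → B u u < 0) (hp : B p p = 1)
    (hv : B p v = 0) (hv' : B p v' = 0) (hvv : B v v = -1) (hv'v' : B v' v' = -1) :
    MonotoneOn (fun t => B (cosh t • p + sinh t • v) (cosh t • p + sinh t • v')) (Set.Ici 0) := by
  have hdiff : B (v - v') (v - v') ≤ 0 := by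
    rcases eq_or_ne (v - v') 0 with h | h
    · simp [h]
    · exact (hdef _ (by rw [map_sub, hv, hv', sub_zero]) h).le
  intro s hs t ht hst
  have hsinh : sinh s ^ 2 ≤ sinh t ^ 2 :=
    pow_le_pow_left₀ (sinh_nonneg_iff.mpr hs) (sinh_le_sinh.mpr hst) 2
  simp only [apply_cosh_smul_add_sinh_smul hB hp hv hv' hvv hv'v']
  nlinarith [mul_le_mul_of_nonpos_right hsinh hdiff]

end BilinForm

def minkowski : LinearMap.BilinForm ℝ (Fin 3 → ℝ) :=
  LinearMap.mk₂ ℝ (fun x y => x 0 * y 0 - x 1 * y 1 - x 2 * y 2)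
    (fun _ _ _ => by simp only [Pi.add_apply]; ring)
    (fun _ _ _ => by simp only [Pi.smul_apply, smul_eq_mul]; ring)
    (fun _ _ _ => by simp only [Pi.add_apply]; ring)
    (fun _ _ _ => by simp only [Pi.smul_apply, smul_eq_mul]; ring)

theorem minkowski_apply (x y : Fin 3 → ℝ) :
    minkowski x y = x 0 * y 0 - x 1 * y 1 - x 2 * y 2 := rfl

theorem minkowski_isSymm : minkowski.IsSymm :=
  ⟨fun x y => by simp only [minkowski_apply]; ring⟩

theorem minkowski_self_neg_of_orthogonal {p u : Fin 3 → ℝ} (hp : minkowski p p = 1)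
    (hpu : minkowski p u = 0) (hu : u ≠ 0) : minkowski u u < 0 := by
  rw [minkowski_apply] at *
  have hp0 : 0 < p 0 ^ 2 := by nlinarith [sq_nonneg (p 1), sq_nonneg (p 2)]
  have key : p 0 ^ 2 * (u 1 ^ 2 + u 2 ^ 2 - u 0 ^ 2) =
      (u 1 ^ 2 + u 2 ^ 2) + (p 1 * u 2 - p 2 * u 1) ^ 2 := by
    linear_combination (u 1 ^ 2 + u 2 ^ 2) * hp - (p 0 * u 0 + p 1 * u 1 + p 2 * u 2) * hpu
  have hu12 : 0 < u 1 ^ 2 + u 2 ^ 2 := by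
    by_contra! h
    have h1 : u 1 = 0 := by nlinarith
    have h2 : u 2 = 0 := by nlinarith
    have h0 : u 0 = 0 := by
      rw [h1, h2] at key
      have : p 0 ^ 2 * u 0 ^ 2 = 0 := by nlinarith
      simpa [hp0.ne'] using this
    exact hu (funext fun i => by fin_cases i <;> assumption)
  nlinarith

def toHyperboloid (z : ℍ) : Fin 3 → ℝ :=
  ![(z.re ^ 2 + z.im ^ 2 + 1) / (2 * z.im), z.re / z.im, (z.re ^ 2 + z.im ^ 2 - 1) / (2 * z.im)]

theorem cosh_dist_eq_minkowski (z w : ℍ) :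
    cosh (dist z w) = minkowski (toHyperboloid z) (toHyperboloid w) := by
  have hz : z.im ≠ 0 := z.im_pos.ne'
  have hw : w.im ≠ 0 := w.im_pos.ne'
  rw [cosh_dist', minkowski_apply]
  simp only [toHyperboloid, Matrix.cons_val]
  field_simp
  ring

theorem minkowski_toHyperboloid_of_isometry {γ : ℝ → ℍ} (hγ : Isometry γ) (s t : ℝ) :
    minkowski (toHyperboloid (γ s)) (toHyperboloid (γ t)) = cosh (s - t) := by
  rw [← cosh_dist_eq_minkowski, hγ.dist_eq, Real.dist_eq, cosh_abs]

theorem geodesics_from_same_point_diverge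
    (σ σ' : ℝ → ℍ) (hσ : Isometry σ) (hσ' : Isometry σ')
    (h0 : σ 0 = σ' 0) :
    MonotoneOn (fun t => dist (σ t) (σ' t)) (Set.Ici (0 : ℝ)) := by
  set p := toHyperboloid (σ 0)
  have hp : minkowski p p = 1 := by simpa using minkowski_toHyperboloid_of_isometry hσ 0 0
  have hdef : ∀ u, minkowski p u = 0 → u ≠ 0 → minkowski u u < 0 :=
    fun _ => minkowski_self_neg_of_orthogonal hp
  obtain ⟨v, hv, hvv, hσv⟩ :=
    exists_eq_cosh_smul_add_sinh_smul minkowski (minkowski_toHyperboloid_of_isometry hσ) hdef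
  obtain ⟨v', hv', hv'v', hσ'v'⟩ :=
    exists_eq_cosh_smul_add_sinh_smul minkowski (minkowski_toHyperboloid_of_isometry hσ')
      (h0 ▸ hdef)
  rw [← h0] at hv' hσ'v'
  refine monotoneOn_of_monotoneOn_cosh_comp (fun _ => dist_nonneg) ?_
  have hcosh : cosh ∘ (fun t => dist (σ t) (σ' t)) =
      fun t => minkowski (cosh t • p + sinh t • v) (cosh t • p + sinh t • v') := by
    ext t
    rw [Function.comp_apply, cosh_dist_eq_minkowski, hσv, hσ'v']
  rw [hcosh]
  exact monotoneOn_apply_cosh_smul_add_sinh_smul minkowski_isSymm hdef hp hv hv' hvv hv'v'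

end BellisFormal
end
end

section
/- Fix a ∈ ℝ and τ ∈ ℝ. Then the function f : ℝ → ℝ given by f(t) := dist( a + e^{τ+t} i, e^{t} i ) (hyperbolic distance in ℍ between the points a + e^{τ+t} i and e^{t} i) is antitone (nonincreasing) in t. -/
open UpperHalfPlane Matrix Real Filter Topology
open scoped MatrixGroups

noncomputable section

namespace BellisFormal

theorem distance_to_vertical_antitone
    (a τ : ℝ) :
    Antitone (fun t : ℝ => dist (mkPt a (Real.exp (τ + t)) (Real.exp_pos _)) (vray t)) := by
  intro s t hst
  simp only [UpperHalfPlane.dist_eq]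
  have hk : ∀ u : ℝ, dist ((mkPt a (Real.exp (τ + u)) (Real.exp_pos _) : ℍ) : ℂ) ((vray u : ℍ) : ℂ)
      / (2 * Real.sqrt ((mkPt a (Real.exp (τ + u)) (Real.exp_pos _)).im * (vray u).im))
      = Real.sqrt ((a ^ 2 + (Real.exp (τ + u) - Real.exp u) ^ 2) / (4 * (Real.exp (τ + u) * Real.exp u))) := by
    intro u
    have him : (mkPt a (Real.exp (τ + u)) (Real.exp_pos _)).im = Real.exp (τ + u) := rfl
    have hvim : (vray u).im = Real.exp u := rfl
    rw [Complex.dist_eq_re_im, him, hvim]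
    have h4 : (2 : ℝ) * Real.sqrt (Real.exp (τ + u) * Real.exp u)
        = Real.sqrt (4 * (Real.exp (τ + u) * Real.exp u)) := by
      have h2 : Real.sqrt 4 = 2 := by
        rw [show (4:ℝ) = 2 ^ 2 by norm_num, Real.sqrt_sq (by norm_num)]
      rw [Real.sqrt_mul (by norm_num : (0:ℝ) ≤ 4), h2]
    rw [h4, ← Real.sqrt_div' _ (by positivity)]
    congr 1
    have h1 : ((mkPt a (Real.exp (τ + u)) (Real.exp_pos _) : ℍ) : ℂ).re = a := rfl
    have h2 : ((vray u : ℍ) : ℂ).re = 0 := rfl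
    have h3 : ((mkPt a (Real.exp (τ + u)) (Real.exp_pos _) : ℍ) : ℂ).im = Real.exp (τ + u) := rfl
    have h5 : ((vray u : ℍ) : ℂ).im = Real.exp u := rfl
    rw [h1, h2, h3, h5]
    ring
  rw [hk s, hk t]
  gcongr 2 * ?_
  rw [Real.arsinh_le_arsinh]
  apply Real.sqrt_le_sqrt
  rw [div_le_div_iff₀ (by positivity) (by positivity)]
  simp only [Real.exp_add]
  have hes : Real.exp s ≤ Real.exp t := Real.exp_le_exp.2 hst
  nlinarith [sq_nonneg a, Real.exp_pos τ, Real.exp_pos s, Real.exp_pos t,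
    mul_le_mul hes hes (Real.exp_pos s).le (Real.exp_pos t).le,
    mul_le_mul_of_nonneg_left (mul_le_mul hes hes (Real.exp_pos s).le (Real.exp_pos t).le)
      (mul_nonneg (sq_nonneg a) (Real.exp_pos τ).le)]

end BellisFormal
end
end

section
/- For all x, y ∈ ℍ, the function t ↦ dist(x, eᵗ i) − dist(y, eᵗ i) tends, as t → +∞, to Real.log (Im y) − Real.log (Im x). (The Busemann cocycle based at ∞ in the upper half-plane is B_∞(x,y) = log Im(y) − log Im(x).) -/
open UpperHalfPlane Matrix Real Filter Topology
open scoped MatrixGroups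

noncomputable section

namespace BellisFormal

/-! `cosh d(x, eᵗ i) = ((Re x)² + (Im x)² + e^{2t}) / (2 Im x · eᵗ)`, so `2 Im x · e^{-t} · cosh d`
tends to `1`. As `e^{-d} ≤ 1` is negligible against `eᵗ`, also `Im x · e^{-t} · e^d → 1`, i.e.
`d(x, eᵗ i) = t - log Im x + o(1)`; the cocycle is the difference of two such expansions. -/

lemma tendsto_mul_exp_of_tendsto_two_mul_mul_cosh {α : Type*} {l : Filter α}
    {c d : α → ℝ} (hc : Tendsto c l (𝓝 0)) (hc_nonneg : ∀ a, 0 ≤ c a) (hd : ∀ a, 0 ≤ d a)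
    (h : Tendsto (fun a => 2 * c a * cosh (d a)) l (𝓝 1)) :
    Tendsto (fun a => c a * exp (d a)) l (𝓝 1) := by
  have h_tail : Tendsto (fun a => c a * exp (-d a)) l (𝓝 0) :=
    squeeze_zero (fun a => mul_nonneg (hc_nonneg a) (exp_pos _).le)
      (fun a => mul_le_of_le_one_right (hc_nonneg a) (exp_le_one_iff.2 (neg_nonpos.2 (hd a)))) hc
  simpa using (h.sub h_tail).congr fun a => by rw [cosh_eq]; ring

lemma two_mul_im_mul_exp_neg_mul_cosh_dist_vray (x : ℍ) (t : ℝ) :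
    2 * (x.im * exp (-t)) * cosh (dist x (vray t)) = (x.re ^ 2 + x.im ^ 2) * exp (-t) ^ 2 + 1 := by
  have hx := x.im_pos
  have h_re : (vray t).re = 0 := rfl
  have h_im : (vray t).im = exp t := rfl
  rw [cosh_dist', h_re, h_im, exp_neg]
  field_simp
  ring

lemma tendsto_dist_vray_sub (x : ℍ) :
    Tendsto (fun t => dist x (vray t) - t) atTop (𝓝 (-Real.log x.im)) := by
  have hx := x.im_pos
  have h_cosh : Tendsto (fun t => 2 * (x.im * exp (-t)) * cosh (dist x (vray t))) atTop (𝓝 1) := by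
    simp_rw [two_mul_im_mul_exp_neg_mul_cosh_dist_vray]
    simpa using ((tendsto_exp_neg_atTop_nhds_zero.pow 2).const_mul (x.re ^ 2 + x.im ^ 2)).add_const 1
  have h_exp := tendsto_mul_exp_of_tendsto_two_mul_mul_cosh
    (by simpa using tendsto_exp_neg_atTop_nhds_zero.const_mul x.im) (fun t => by positivity)
    (fun t => dist_nonneg) h_cosh
  have h_log := (continuousAt_log one_ne_zero).tendsto.comp h_exp
  rw [log_one] at h_log
  have h_eq : ∀ t, log (x.im * exp (-t) * exp (dist x (vray t))) - log x.im = dist x (vray t) - t :=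
    fun t => by rw [log_mul (by positivity) (exp_pos _).ne', log_mul hx.ne' (exp_pos _).ne',
      log_exp, log_exp]; ring
  simpa using (h_log.sub_const (log x.im)).congr h_eq

theorem busemann_cocycle_at_infty
    (x y : ℍ) :
    Tendsto (fun t : ℝ => dist x (vray t) - dist y (vray t)) atTop
      (nhds (Real.log y.im - Real.log x.im)) := by
  simpa [neg_add_eq_sub] using
    (tendsto_dist_vray_sub x).sub (tendsto_dist_vray_sub y)

end BellisFormal
end
end
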